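/- arXiv:1712.05487 — 3 statements merged into one kernel-verified Lean document; each statement's English description precedes it below -/
import Mathlib

section
/- Let N, L be positive integers and p_1, …, p_N ∈ ℝ² be nonzero points. If k is chosen uniformly at random from {1,…,2^L}, then with probability at least 1 − N/2^L, the rotation by angle φ_k (where cos φ_k = (1−(k·2^{−L})²)/(1+(k·2^{−L})²) and sin φ_k = 2(k·2^{−L})/(1+(k·2^{−L})²)) maps each p_ℓ to a point p_ℓ' = (x_ℓ', y_ℓ') with min(|x_ℓ'|, |y_ℓ'|) > 2^{−(L+2)} · ‖p_ℓ‖_∞. -/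
set_option maxHeartbeats 1000000

/-- Rotation by angle `φ_k` succeeds for all the points, for `k ∈ {1, …, 2^L}`. -/
def GoodRotation (N L : ℕ) (p : Fin N → ℝ × ℝ) (k : ℕ) : Prop :=
  ∀ ℓ : Fin N,
    min |((1 - ((k : ℝ) / 2 ^ L) ^ 2) / (1 + ((k : ℝ) / 2 ^ L) ^ 2) * (p ℓ).1 -
          2 * ((k : ℝ) / 2 ^ L) / (1 + ((k : ℝ) / 2 ^ L) ^ 2) * (p ℓ).2)|
        |(2 * ((k : ℝ) / 2 ^ L) / (1 + ((k : ℝ) / 2 ^ L) ^ 2) * (p ℓ).1 +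
          (1 - ((k : ℝ) / 2 ^ L) ^ 2) / (1 + ((k : ℝ) / 2 ^ L) ^ 2) * (p ℓ).2)|
      > 2 ^ (-(L : ℤ) - 2) * max |(p ℓ).1| |(p ℓ).2|

lemma polyA (δ t t' : ℝ) (hδ0 : 0 < δ) (hδ : δ ≤ 1/2)
    (ht1 : δ ≤ t) (ht2 : t ≤ 1) (ht1' : δ ≤ t') (ht2' : t' ≤ 1) :
    3*δ*((1+t^2)*(1+t'^2)) ≤ 5*((1-t^2)*(1-t'^2)+4*t*t') := by
  nlinarith [mul_nonneg (sub_nonneg.2 ht1) (sub_nonneg.2 ht1'),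
    mul_nonneg (sub_nonneg.2 ht2) (sub_nonneg.2 ht2'),
    mul_nonneg (sub_nonneg.2 ht1) (sub_nonneg.2 ht2'),
    mul_nonneg (sub_nonneg.2 ht2) (sub_nonneg.2 ht1'),
    mul_pos hδ0 hδ0, sq_nonneg (t-t'), sq_nonneg (t+t'), sq_nonneg (t*t'-δ),
    mul_nonneg (mul_nonneg (sub_nonneg.2 ht1) (sub_nonneg.2 ht1')) (sub_nonneg.2 ht2),
    mul_nonneg (mul_nonneg (sub_nonneg.2 ht2) (sub_nonneg.2 ht2')) hδ0.le]

lemma polyB (δ t t' : ℝ) (hδ0 : 0 < δ) (hδ : δ ≤ 1/2)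
    (ht1 : δ ≤ t) (ht2 : t ≤ 1) (ht2' : t' ≤ 1) (hd : δ ≤ t' - t) :
    3*δ*((1+t^2)*(1+t'^2)) ≤ 10*(t'-t)*(1+t*t') := by
  have ht0 : 0 ≤ t := hδ0.le.trans ht1
  have ht0' : 0 ≤ t' := by linarith
  have hu0 : 0 ≤ t*t' := mul_nonneg ht0 ht0'
  have hu1 : t*t' ≤ 1 := by nlinarith
  nlinarith [mul_nonneg hδ0.le (mul_nonneg (by nlinarith : (0:ℝ) ≤ 1-t^2) (by nlinarith : (0:ℝ) ≤ 1-t'^2)),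
    mul_nonneg (by linarith : (0:ℝ) ≤ t'-t-δ) (by nlinarith : (0:ℝ) ≤ 1+t*t'),
    mul_nonneg (mul_nonneg hδ0.le hu0) (by linarith : (0:ℝ) ≤ 1 - t*t')]

/-- Contradiction pattern: a rotation with a large coefficient `κ` cannot map a point
with one small coordinate to a point with a small coordinate. -/
lemma contra (δ r κ co V W W' : ℝ) (hδ0 : 0 < δ) (hδ : δ ≤ 1/2) (hr : 0 < r)
    (hκ : 3/5*δ ≤ κ) (hco : co^2 ≤ 1) (hsum : r^2 ≤ W^2 + V^2)
    (hW : |W| ≤ δ/4*r) (hW' : |W'| ≤ δ/4*r) (heq : W' = co*W + κ*V) : False := by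
  obtain ⟨hW1, hW2⟩ := abs_le.1 hW
  obtain ⟨hW1', hW2'⟩ := abs_le.1 hW'
  have hWs : W^2 ≤ (δ/4*r)^2 := by nlinarith
  have hW's : W'^2 ≤ (δ/4*r)^2 := by nlinarith
  have key : κ^2*V^2 ≤ 4*((δ/4*r)^2) := by
    have h1 : κ*V = W' - co*W := by rw [heq]; ring
    have h2 : κ^2*V^2 = (W' - co*W)^2 := by rw [← h1]; ring
    rw [h2]
    nlinarith [mul_nonneg (sub_nonneg.2 hco) (sq_nonneg W), sq_nonneg (W' + co*W),
      sq_nonneg (W' - co*W)]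
  have hκ2 : (3/5*δ)^2 ≤ κ^2 := pow_le_pow_left₀ (by positivity) hκ 2
  have hV2 : r^2 - (δ/4*r)^2 ≤ V^2 := by nlinarith
  have hpos : 0 ≤ r^2 - (δ/4*r)^2 := by
    nlinarith [mul_nonneg (by nlinarith : (0:ℝ) ≤ 16 - δ^2) (sq_nonneg r)]
  have hVk : κ^2*(r^2 - (δ/4*r)^2) ≤ κ^2*V^2 :=
    mul_le_mul_of_nonneg_left hV2 (sq_nonneg κ)
  have h3 := mul_le_mul_of_nonneg_right hκ2 hpos
  nlinarith [mul_pos hr hr, mul_pos hδ0 hδ0,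
    mul_nonneg (mul_nonneg hδ0.le hδ0.le) (mul_nonneg (mul_pos hr hr).le
      (by nlinarith : (0:ℝ) ≤ 1 - 4*δ^2))]

/-- Norm is preserved by the rotation. -/
lemma rotXY (t x y : ℝ) :
    ((1-t^2)/(1+t^2)*x - 2*t/(1+t^2)*y)^2 + (2*t/(1+t^2)*x + (1-t^2)/(1+t^2)*y)^2
      = x^2 + y^2 := by
  have h1 : (0:ℝ) < 1+t^2 := by positivity
  field_simp
  ring

lemma rot_ab (t t' : ℝ) :
    (((1-t^2)*(1-t'^2)+4*t*t') / ((1+t^2)*(1+t'^2)))^2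
      + (2*(t'-t)*(1+t*t') / ((1+t^2)*(1+t'^2)))^2 = 1 := by
  have h1 : (0:ℝ) < 1+t^2 := by positivity
  have h2 : (0:ℝ) < 1+t'^2 := by positivity
  field_simp
  ring

lemma rot_comp (t t' x y : ℝ) :
    (1-t'^2)/(1+t'^2)*x - 2*t'/(1+t'^2)*y
      = ((1-t^2)*(1-t'^2)+4*t*t')/((1+t^2)*(1+t'^2)) * ((1-t^2)/(1+t^2)*x - 2*t/(1+t^2)*y)
        + 2*(t'-t)*(1+t*t')/((1+t^2)*(1+t'^2)) * (-(2*t/(1+t^2)*x + (1-t^2)/(1+t^2)*y)) := by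
  have h1 : (0:ℝ) < 1+t^2 := by positivity
  have h2 : (0:ℝ) < 1+t'^2 := by positivity
  field_simp
  ring

lemma rot_comp' (t t' x y : ℝ) :
    2*t'/(1+t'^2)*x + (1-t'^2)/(1+t'^2)*y
      = 2*(t'-t)*(1+t*t')/((1+t^2)*(1+t'^2)) * ((1-t^2)/(1+t^2)*x - 2*t/(1+t^2)*y)
        + ((1-t^2)*(1-t'^2)+4*t*t')/((1+t^2)*(1+t'^2)) * (2*t/(1+t^2)*x + (1-t^2)/(1+t^2)*y) := by
  have h1 : (0:ℝ) < 1+t^2 := by positivity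
  have h2 : (0:ℝ) < 1+t'^2 := by positivity
  field_simp
  ring

lemma sq_max_le (x y : ℝ) : (max |x| |y|)^2 ≤ x^2 + y^2 := by
  rcases max_cases |x| |y| with ⟨he, _⟩ | ⟨he, _⟩ <;> rw [he] <;>
    nlinarith [sq_abs x, sq_abs y, sq_nonneg x, sq_nonneg y]

/-- Abstract form of the core geometric fact. -/
lemma core2 (δ r a b X Y X' Y' : ℝ) (hδ0 : 0 < δ) (hδ : δ ≤ 1/2) (hr : 0 < r)
    (hXY : r^2 ≤ X^2 + Y^2) (hab : a^2 + b^2 = 1) (ha : 3/5*δ ≤ a) (hb : 3/5*δ ≤ b)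
    (hX1 : X' = a*X + b*(-Y)) (hY1 : Y' = b*X + a*Y)
    (hbad : min |X| |Y| ≤ δ/4*r) (hbad' : min |X'| |Y'| ≤ δ/4*r) : False := by
  have ha1 : a^2 ≤ 1 := by nlinarith [sq_nonneg b]
  have hb1 : b^2 ≤ 1 := by nlinarith [sq_nonneg a]
  have hX2 : X' = (-b)*Y + a*X := by rw [hX1]; ring
  have hY2 : Y' = a*Y + b*X := by rw [hY1]; ring
  rcases min_le_iff.1 hbad with h | h <;> rcases min_le_iff.1 hbad' with h' | h'
  · exact contra δ r b a (-Y) X X' hδ0 hδ hr hb ha1 (by nlinarith) h h' hX1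
  · exact contra δ r a b Y X Y' hδ0 hδ hr ha hb1 (by nlinarith) h h' hY1
  · exact contra δ r a (-b) X Y X' hδ0 hδ hr ha (by nlinarith)
      (by nlinarith) h h' hX2
  · exact contra δ r b a X Y Y' hδ0 hδ hr hb ha1 (by nlinarith) h h' hY2

/-- Core geometric fact: two distinct rotation parameters cannot both be bad for the
same nonzero point. -/
lemma core (δ t t' x y : ℝ) (hδ0 : 0 < δ) (hδ : δ ≤ 1/2)
    (ht1 : δ ≤ t) (ht2 : t ≤ 1) (ht1' : δ ≤ t') (ht2' : t' ≤ 1) (hd : δ ≤ t' - t)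
    (hr : 0 < max |x| |y|)
    (hbad : min |((1 - t ^ 2) / (1 + t ^ 2) * x - 2 * t / (1 + t ^ 2) * y)|
        |(2 * t / (1 + t ^ 2) * x + (1 - t ^ 2) / (1 + t ^ 2) * y)| ≤ δ/4 * max |x| |y|)
    (hbad' : min |((1 - t' ^ 2) / (1 + t' ^ 2) * x - 2 * t' / (1 + t' ^ 2) * y)|
        |(2 * t' / (1 + t' ^ 2) * x + (1 - t' ^ 2) / (1 + t' ^ 2) * y)| ≤ δ/4 * max |x| |y|) :
    False := by
  have hd1 : (0:ℝ) < 1 + t^2 := by positivity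
  have hd2 : (0:ℝ) < 1 + t'^2 := by positivity
  have ha : 3/5*δ ≤ ((1-t^2)*(1-t'^2)+4*t*t') / ((1+t^2)*(1+t'^2)) := by
    rw [le_div_iff₀ (by positivity)]
    nlinarith [polyA δ t t' hδ0 hδ ht1 ht2 ht1' ht2']
  have hb : 3/5*δ ≤ 2*(t'-t)*(1+t*t') / ((1+t^2)*(1+t'^2)) := by
    rw [le_div_iff₀ (by positivity)]
    nlinarith [polyB δ t t' hδ0 hδ ht1 ht2 ht2' hd]
  exact core2 δ (max |x| |y|)
    (((1-t^2)*(1-t'^2)+4*t*t') / ((1+t^2)*(1+t'^2)))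
    (2*(t'-t)*(1+t*t') / ((1+t^2)*(1+t'^2)))
    ((1 - t ^ 2) / (1 + t ^ 2) * x - 2 * t / (1 + t ^ 2) * y)
    (2 * t / (1 + t ^ 2) * x + (1 - t ^ 2) / (1 + t ^ 2) * y)
    ((1 - t' ^ 2) / (1 + t' ^ 2) * x - 2 * t' / (1 + t' ^ 2) * y)
    (2 * t' / (1 + t' ^ 2) * x + (1 - t' ^ 2) / (1 + t' ^ 2) * y)
    hδ0 hδ hr
    (by rw [rotXY t x y]; exact sq_max_le x y)
    (rot_ab t t') ha hb
    (by have := rot_comp t t' x y; linarith [this])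
    (by have := rot_comp' t t' x y; linarith [this])
    hbad hbad'

lemma bad_lt (L : ℕ) (hL : 0 < L) (x y : ℝ) (hr : 0 < max |x| |y|) {k k' : ℕ}
    (hk1 : 1 ≤ k) (hk2 : k' ≤ 2^L) (hlt : k < k')
    (hb : min |((1 - ((k : ℝ) / 2 ^ L) ^ 2) / (1 + ((k : ℝ) / 2 ^ L) ^ 2) * x -
          2 * ((k : ℝ) / 2 ^ L) / (1 + ((k : ℝ) / 2 ^ L) ^ 2) * y)|
        |(2 * ((k : ℝ) / 2 ^ L) / (1 + ((k : ℝ) / 2 ^ L) ^ 2) * x +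
          (1 - ((k : ℝ) / 2 ^ L) ^ 2) / (1 + ((k : ℝ) / 2 ^ L) ^ 2) * y)|
      ≤ 2 ^ (-(L : ℤ) - 2) * max |x| |y|)
    (hb' : min |((1 - ((k' : ℝ) / 2 ^ L) ^ 2) / (1 + ((k' : ℝ) / 2 ^ L) ^ 2) * x -
          2 * ((k' : ℝ) / 2 ^ L) / (1 + ((k' : ℝ) / 2 ^ L) ^ 2) * y)|
        |(2 * ((k' : ℝ) / 2 ^ L) / (1 + ((k' : ℝ) / 2 ^ L) ^ 2) * x +
          (1 - ((k' : ℝ) / 2 ^ L) ^ 2) / (1 + ((k' : ℝ) / 2 ^ L) ^ 2) * y)|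
      ≤ 2 ^ (-(L : ℤ) - 2) * max |x| |y|) : False := by
  have h2L : (0:ℝ) < 2^L := by positivity
  set δ : ℝ := ((2:ℝ)^L)⁻¹ with hδdef
  have hδ0 : 0 < δ := by positivity
  have h2 : (2:ℝ) ≤ 2^L := by
    calc (2:ℝ) = 2^1 := (pow_one 2).symm
    _ ≤ 2^L := pow_le_pow_right₀ one_le_two hL
  have hδ : δ ≤ 1/2 := by
    rw [hδdef]
    rw [inv_le_comm₀ (by positivity) (by norm_num)]
    linarith
  have hthr : (2:ℝ) ^ (-(L : ℤ) - 2) = δ/4 := by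
    rw [hδdef, zpow_sub₀ (by norm_num : (2:ℝ) ≠ 0), zpow_neg, zpow_natCast]
    norm_num
  have hk2' : (k':ℝ) ≤ 2^L := by exact_mod_cast hk2
  have hkk : (k:ℝ) + 1 ≤ k' := by exact_mod_cast hlt
  have hk1' : (1:ℝ) ≤ k := by exact_mod_cast hk1
  refine core δ ((k:ℝ)/2^L) ((k':ℝ)/2^L) x y hδ0 hδ ?_ ?_ ?_ ?_ ?_ hr ?_ ?_
  · rw [hδdef, inv_eq_one_div]
    gcongr
    all_goals exact hk1'
  · rw [div_le_one h2L]; linarith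
  · rw [hδdef, inv_eq_one_div]
    gcongr
    all_goals exact_mod_cast hk1.trans hlt.le
  · rw [div_le_one h2L]; exact hk2'
  · rw [hδdef, inv_eq_one_div, div_sub_div_same]
    gcongr
    all_goals linarith
  · rw [← hthr]; exact hb
  · rw [← hthr]; exact hb'

theorem random_rotation_success (N L : ℕ) (hN : 0 < N) (hL : 0 < L)
    (p : Fin N → ℝ × ℝ) (hp : ∀ ℓ, p ℓ ≠ 0) :
    (1 : ℝ) - N / 2 ^ L ≤
      (({k : ℕ | k ∈ Finset.Icc 1 (2 ^ L) ∧ GoodRotation N L p k}.ncard : ℝ)) / 2 ^ L := by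
  classical
  set I := Finset.Icc 1 (2^L) with hIdef
  have hIcard : I.card = 2^L := by simp [hIdef]
  set G := I.filter (fun k => GoodRotation N L p k) with hGdef
  set B := I.filter (fun k => ¬ GoodRotation N L p k) with hBdef
  have hset : {k : ℕ | k ∈ Finset.Icc 1 (2 ^ L) ∧ GoodRotation N L p k} = ↑G := by
    ext k; simp [hGdef, hIdef]
  rw [hset, Set.ncard_coe_finset]
  have hGB : G.card + B.card = 2^L := by
    rw [hGdef, hBdef, Finset.card_filter_add_card_filter_not, hIcard]
  have hrpos : ∀ ℓ : Fin N, 0 < max |(p ℓ).1| |(p ℓ).2| := by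
    intro ℓ
    have h : (p ℓ).1 ≠ 0 ∨ (p ℓ).2 ≠ 0 := by
      by_contra h; push_neg at h
      exact hp ℓ (Prod.ext h.1 h.2)
    rcases h with h | h
    · exact lt_of_lt_of_le (abs_pos.2 h) (le_max_left _ _)
    · exact lt_of_lt_of_le (abs_pos.2 h) (le_max_right _ _)
  have hB : B.card ≤ N := by
    have hsub : B ⊆ Finset.univ.biUnion (fun ℓ : Fin N => I.filter (fun k =>
        min |((1 - ((k : ℝ) / 2 ^ L) ^ 2) / (1 + ((k : ℝ) / 2 ^ L) ^ 2) * (p ℓ).1 -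
          2 * ((k : ℝ) / 2 ^ L) / (1 + ((k : ℝ) / 2 ^ L) ^ 2) * (p ℓ).2)|
        |(2 * ((k : ℝ) / 2 ^ L) / (1 + ((k : ℝ) / 2 ^ L) ^ 2) * (p ℓ).1 +
          (1 - ((k : ℝ) / 2 ^ L) ^ 2) / (1 + ((k : ℝ) / 2 ^ L) ^ 2) * (p ℓ).2)|
      ≤ 2 ^ (-(L : ℤ) - 2) * max |(p ℓ).1| |(p ℓ).2|)) := by
      intro k hk
      rw [hBdef, Finset.mem_filter] at hk
      obtain ⟨hkI, hbad⟩ := hk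
      rw [GoodRotation] at hbad
      push_neg at hbad
      obtain ⟨ℓ, hℓ⟩ := hbad
      rw [Finset.mem_biUnion]
      exact ⟨ℓ, Finset.mem_univ ℓ, Finset.mem_filter.2 ⟨hkI, hℓ⟩⟩
    calc B.card ≤ _ := Finset.card_le_card hsub
      _ ≤ ∑ ℓ : Fin N, (I.filter _).card := Finset.card_biUnion_le
      _ ≤ ∑ _ℓ : Fin N, 1 := by
        apply Finset.sum_le_sum
        intro ℓ _
        apply Finset.card_le_one.2
        intro k hk k' hk'
        rw [Finset.mem_filter, hIdef, Finset.mem_Icc] at hk hk'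
        obtain ⟨⟨hk1, hk2⟩, hkb⟩ := hk
        obtain ⟨⟨hk1', hk2'⟩, hkb'⟩ := hk'
        rcases lt_trichotomy k k' with h | h | h
        · exact absurd (bad_lt L hL _ _ (hrpos ℓ) hk1 hk2' h hkb hkb') (fun f => f.elim)
        · exact h
        · exact absurd (bad_lt L hL _ _ (hrpos ℓ) hk1' hk2 h hkb' hkb) (fun f => f.elim)
      _ = N := by simp
  have h2L : (0:ℝ) < 2^L := by positivity
  have hGc : (2^L : ℝ) - N ≤ G.card := by
    have h1 : (G.card : ℝ) + B.card = 2^L := by exact_mod_cast hGB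
    have h2 : (B.card : ℝ) ≤ N := by exact_mod_cast hB
    linarith
  rw [le_div_iff₀ h2L, sub_mul, one_mul, div_mul_cancel₀ _ h2L.ne']
  linarith
end

section
/- Let f ∈ ℂ[x] be a univariate polynomial of degree d, write f(x) = Σ_{i=0}^d c_i x^i, let r > 0 and k ∈ {0,…,d}, and suppose |c_k| r^k > (3/2) · Σ_{i ≠ k} |c_i| r^i. Then f has exactly k roots (counted with multiplicity) in the open disc of radius r centered at 0, and |f(x)| > (1/3) |c_k| r^k for all x on the boundary circle |x| = r. -/
/-!
By the argument principle, `(2πi)⁻¹ ∮ p'/p` over a circle counts the roots of a complex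
polynomial `p` inside it. Along the homotopy `p + t q`, `t ∈ [0, 1]`, nothing vanishes on the
circle as long as `‖q‖ < ‖p‖` there, so this count is a continuous integer-valued function of `t`,
hence constant (Rouché). Pellet's test applies this to `p = c_k X^k` and `q = f - p`; on `|x| = r`
the dominance hypothesis gives `‖q x‖ ≤ (2/3) |c_k| r^k < ‖p x‖`.
-/

open Polynomial Finset
open Metric Real unitInterval

noncomputable def Polynomial.rootCountBall (p : ℂ[X]) (c : ℂ) (R : ℝ) : ℕ :=
  (p.roots.filter fun z => dist z c < R).card

theorem circleIntegral_sub_inv_eq_ite {c w : ℂ} {R : ℝ} (hR : 0 < R) (hw : w ∉ sphere c R) :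
    (∮ z in C(c, R), (z - w)⁻¹) = if dist w c < R then 2 * π * Complex.I else 0 := by
  split_ifs with h
  · exact circleIntegral.integral_sub_inv_of_mem_ball h
  · have hw' : w ∉ closedBall c R := fun h' => hw (le_antisymm h' (not_lt.1 h))
    refine DifferentiableOn.diffContOnCl ?_ |>.circleIntegral_eq_zero hR.le
    refine ((differentiableOn_id.sub_const w).inv fun z hz => sub_ne_zero.2 ?_).mono
      closure_ball_subset_closedBall
    rintro rfl
    exact hw' hz

theorem circleIntegral_multiset_sum_sub_inv {c : ℂ} {R : ℝ} (hR : 0 < R) (s : Multiset ℂ)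
    (hs : ∀ w ∈ s, w ∉ sphere c R) :
    (∮ z in C(c, R), (s.map fun w => (z - w)⁻¹).sum) =
      2 * π * Complex.I * (s.filter fun w => dist w c < R).card := by
  induction s using Multiset.induction_on with
  | empty => simp [circleIntegral]
  | cons w s ih =>
    have hw := hs w (Multiset.mem_cons_self w s)
    have hs' := fun v hv => hs v (Multiset.mem_cons_of_mem hv)
    have hcont : ∀ v ∉ sphere c R, ContinuousOn (fun z => (z - v)⁻¹) (sphere c R) := fun v hv =>
      (continuousOn_id.sub continuousOn_const).inv₀ fun z hz =>
        sub_ne_zero.2 (ne_of_mem_of_not_mem hz hv)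
    have hsum : CircleIntegrable (fun z => (s.map fun v => (z - v)⁻¹).sum) c R :=
      (continuousOn_multiset_sum s fun v hv => hcont v (hs' v hv)).circleIntegrable hR.le
    simp only [Multiset.map_cons, Multiset.sum_cons]
    rw [circleIntegral.integral_add ((hcont w hw).circleIntegrable hR.le) hsum, ih hs',
      circleIntegral_sub_inv_eq_ite hR hw, Multiset.filter_cons]
    split_ifs
    · rw [Multiset.singleton_add, Multiset.card_cons]; push_cast; ring
    · rw [Multiset.zero_add, zero_add]

theorem Polynomial.circleIntegral_derivative_div_eq (p : ℂ[X]) {c : ℂ} {R : ℝ} (hR : 0 < R)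
    (hp : ∀ z ∈ sphere c R, p.eval z ≠ 0) :
    (∮ z in C(c, R), p.derivative.eval z / p.eval z) =
      2 * π * Complex.I * p.rootCountBall c R := by
  have hroots : ∀ w ∈ p.roots, w ∉ sphere c R := fun w hw hws =>
    hp w hws (isRoot_of_mem_roots hw)
  rw [circleIntegral.integral_congr hR.le fun z hz =>
    (IsAlgClosed.splits p).eval_derivative_div_eval_of_ne_zero (hp z hz)]
  simpa only [one_div, rootCountBall] using circleIntegral_multiset_sum_sub_inv hR p.roots hroots

theorem continuous_circleIntegral {X E : Type*} [TopologicalSpace X] [NormedAddCommGroup E]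
    [NormedSpace ℂ E] {F : X → ℂ → E} {c : ℂ} {R : ℝ}
    (hF : Continuous fun p : X × ℝ => F p.1 (circleMap c R p.2)) :
    Continuous fun x => ∮ z in C(c, R), F x z := by
  refine intervalIntegral.continuous_parametric_intervalIntegral_of_continuous' ?_ 0 (2 * π)
  simp only [Function.uncurry_def, deriv_circleMap]
  exact (((continuous_circleMap 0 R).comp continuous_snd).mul continuous_const).smul hF

theorem continuous_of_continuous_natCast {X : Type*} [TopologicalSpace X] {n : X → ℕ}
    (h : Continuous fun x => (n x : ℂ)) : Continuous n :=
  Nat.isClosedEmbedding_coe_real.continuous_iff.2 <| by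
    simpa [Function.comp_def] using Complex.continuous_re.comp h

theorem Polynomial.rootCountBall_add_eq_of_norm_lt (p q : ℂ[X]) {c : ℂ} {R : ℝ} (hR : 0 < R)
    (h : ∀ z ∈ sphere c R, ‖q.eval z‖ < ‖p.eval z‖) :
    (p + q).rootCountBall c R = p.rootCountBall c R := by
  set P : I → ℂ[X] := fun t => p + C ((t : ℝ) : ℂ) * q
  have hP_eval : ∀ t z, (P t).eval z = p.eval z + (t : ℝ) * q.eval z := by simp [P]
  have hP_ne : ∀ t, ∀ z ∈ sphere c R, (P t).eval z ≠ 0 := by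
    intro t z hz
    rw [hP_eval, ← norm_pos_iff]
    calc 0 < ‖p.eval z‖ - ‖q.eval z‖ := sub_pos.2 (h z hz)
      _ ≤ ‖p.eval z‖ - ‖((t : ℝ) : ℂ) * q.eval z‖ := by
        rw [norm_mul, Complex.norm_real, Real.norm_of_nonneg t.2.1]
        gcongr
        exact mul_le_of_le_one_left (norm_nonneg _) t.2.2
      _ ≤ ‖p.eval z + (t : ℝ) * q.eval z‖ := norm_sub_le_norm_add _ _
  have hcount : (fun t => ((P t).rootCountBall c R : ℂ)) =
      fun t => (2 * π * Complex.I)⁻¹ * ∮ z in C(c, R), (P t).derivative.eval z / (P t).eval z := by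
    funext t
    rw [(P t).circleIntegral_derivative_div_eq hR (hP_ne t),
      inv_mul_cancel_left₀ (by simp [pi_ne_zero])]
  have hcont : Continuous fun t => (P t).rootCountBall c R := by
    refine continuous_of_continuous_natCast ?_
    rw [hcount]
    refine continuous_const.mul (continuous_circleIntegral ?_)
    simp only [P, derivative_add, derivative_C_mul, eval_add, eval_mul, eval_C]
    refine Continuous.div (by fun_prop) (by fun_prop) fun x => ?_
    simpa [P] using hP_ne x.1 _ (circleMap_mem_sphere c hR.le x.2)
  simpa [P] using PreconnectedSpace.constant inferInstance hcont (x := 1) (y := 0)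

theorem Polynomial.eval_sub_coeff_mul_pow {R : Type*} [CommRing R] (f : R[X]) {n : ℕ}
    (hn : f.natDegree < n) (k : ℕ) (x : R) :
    f.eval x - f.coeff k * x ^ k = ∑ i ∈ (range n).erase k, f.coeff i * x ^ i := by
  rw [eval_eq_sum_range' hn]
  by_cases hk : k ∈ range n
  · rw [← add_sum_erase _ _ hk, add_sub_cancel_left]
  · rw [erase_eq_of_notMem hk, coeff_eq_zero_of_natDegree_lt (by simp at hk; omega), zero_mul,
      sub_zero]

theorem Polynomial.norm_eval_sub_coeff_mul_pow_le {𝕜 : Type*} [NormedField 𝕜] (f : 𝕜[X]) {n : ℕ}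
    (hn : f.natDegree < n) (k : ℕ) (x : 𝕜) :
    ‖f.eval x - f.coeff k * x ^ k‖ ≤ ∑ i ∈ (range n).erase k, ‖f.coeff i‖ * ‖x‖ ^ i := by
  rw [f.eval_sub_coeff_mul_pow hn]
  refine (norm_sum_le _ _).trans_eq (sum_congr rfl fun i _ => ?_)
  rw [norm_mul, norm_pow]

theorem Polynomial.rootCountBall_C_mul_X_pow {a : ℂ} (ha : a ≠ 0) (k : ℕ) {R : ℝ} (hR : 0 < R) :
    (C a * X ^ k).rootCountBall 0 R = k := by
  rw [rootCountBall, roots_C_mul_X_pow ha, Multiset.nsmul_singleton,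
    Multiset.filter_eq_self.2 fun z hz => ?_, Multiset.card_replicate]
  rwa [Multiset.eq_of_mem_replicate hz, dist_self]

theorem pellet_test_general (f : Polynomial ℂ) (d k : ℕ) (hdeg : f.natDegree = d)
    (r : ℝ) (hr : 0 < r)
    (hdom : ‖f.coeff k‖ * r ^ k >
      (3 / 2) * ∑ i ∈ (Finset.range (d + 1)).erase k, ‖f.coeff i‖ * r ^ i) :
    (f.roots.filter (fun z => ‖z‖ < r)).card = k ∧
      ∀ x : ℂ, ‖x‖ = r → (1 / 3) * ‖f.coeff k‖ * r ^ k < ‖f.eval x‖ := by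
  set S := ∑ i ∈ (range (d + 1)).erase k, ‖f.coeff i‖ * r ^ i
  have hS : 0 ≤ S := sum_nonneg fun i _ => by positivity
  have hck : f.coeff k ≠ 0 := fun h => by simp [h] at hdom; linarith
  set p := C (f.coeff k) * X ^ k
  have hp : ∀ x : ℂ, ‖x‖ = r → ‖p.eval x‖ = ‖f.coeff k‖ * r ^ k := fun x hx => by
    simp [p, hx]
  have hfp : ∀ x : ℂ, ‖x‖ = r → ‖(f - p).eval x‖ ≤ S := fun x hx => by
    simpa [p, hx] using f.norm_eval_sub_coeff_mul_pow_le (hdeg ▸ d.lt_succ_self) k x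
  constructor
  · have hcount := p.rootCountBall_add_eq_of_norm_lt (f - p) hr fun z hz => by
      rw [mem_sphere_zero_iff_norm] at hz
      linarith [hp z hz, hfp z hz]
    rw [add_sub_cancel, rootCountBall_C_mul_X_pow hck k hr] at hcount
    simpa [rootCountBall] using hcount
  · intro x hx
    have := norm_le_norm_add_norm_sub (f.eval x) (p.eval x)
    rw [← eval_sub] at this
    linarith [hp x hx, hfp x hx]

theorem pellet_test (f : Polynomial ℂ) (d k : ℕ) (hdeg : f.natDegree = d)
    (hk : k ≤ d) (r : ℝ) (hr : 0 < r)
    (hdom : ‖f.coeff k‖ * r ^ k >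
      (3 / 2) * ∑ i ∈ (Finset.range (d + 1)).erase k, ‖f.coeff i‖ * r ^ i) :
    (f.roots.filter (fun z => ‖z‖ < r)).card = k ∧
      ∀ x : ℂ, ‖x‖ = r → (1 / 3) * ‖f.coeff k‖ * r ^ k < ‖f.eval x‖ :=
  pellet_test_general f d k hdeg r hr hdom
end

section
/- Let R ∈ ℂ[x] be a univariate polynomial of degree D with exactly k roots (counted with multiplicity) of absolute value at most r/(16D) and the remaining D − k roots of absolute value at least 16 D^4 r, for some r > 0 and 0 ≤ k ≤ D. Then the Pellet dominance condition holds at radius r: writing R(x) = Σ_i c_i x^i, |c_k| r^k > (3/2) Σ_{i≠k} |c_i| r^i. -/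
/-!
Split `R = P * Q`, where `P = ∏ (X - z)` runs over the `k` small roots and `Q` is the leading
coefficient times the product over the large ones. The weighted norm `‖f‖_r = Σ |f_i| r^i` is
submultiplicative, so `‖P‖_r ≤ ∏ (r + |z|) ≤ (1 + 1/(16D))^k r^k` and
`‖Q‖_r ≤ ∏ (r + |w|) ≤ (1 + 1/(16D⁴))^(D-k) |Q(0)|`, and both factors are at most `16/15`.
Since `P` is monic of degree `k`, `R - Q(0) X^k = X^k (Q - Q(0)) + (P - X^k) Q` has weighted norm at
most `‖P‖_r ‖Q‖_r - r^k |Q(0)| ≤ (31/225) r^k |Q(0)|`. This is less than `2/5` of the dominant term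
`|Q(0)| r^k`, which is the margin the factor `3/2` of the test needs.
-/

open Polynomial Finset

namespace Polynomial

variable {A : Type*}

section SeminormedRing

variable [SeminormedRing A] {r : ℝ}

noncomputable def weightedL1Norm (r : ℝ) (p : A[X]) : ℝ :=
  p.sum fun i a => ‖a‖ * r ^ i

theorem weightedL1Norm_def (p : A[X]) :
    p.weightedL1Norm r = ∑ i ∈ p.support, ‖p.coeff i‖ * r ^ i :=
  p.sum_def _

theorem weightedL1Norm_eq_sum_range {p : A[X]} {n : ℕ} (hn : p.natDegree < n) :
    p.weightedL1Norm r = ∑ i ∈ range n, ‖p.coeff i‖ * r ^ i :=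
  p.sum_over_range' (by simp) n hn

theorem weightedL1Norm_nonneg (hr : 0 ≤ r) (p : A[X]) : 0 ≤ p.weightedL1Norm r :=
  Finset.sum_nonneg fun _ _ => by positivity

@[simp]
theorem weightedL1Norm_zero : (0 : A[X]).weightedL1Norm r = 0 := by
  simp [weightedL1Norm]

@[simp]
theorem weightedL1Norm_monomial (n : ℕ) (a : A) :
    (monomial n a).weightedL1Norm r = ‖a‖ * r ^ n :=
  sum_monomial_index a _ (by simp)

theorem weightedL1Norm_add_le (hr : 0 ≤ r) (p q : A[X]) :
    (p + q).weightedL1Norm r ≤ p.weightedL1Norm r + q.weightedL1Norm r := by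
  have hn := lt_add_one (max p.natDegree q.natDegree)
  rw [weightedL1Norm_eq_sum_range ((natDegree_add_le p q).trans_lt hn),
    weightedL1Norm_eq_sum_range ((le_max_left _ _).trans_lt hn),
    weightedL1Norm_eq_sum_range ((le_max_right _ _).trans_lt hn), ← sum_add_distrib]
  gcongr with i
  rw [coeff_add, ← add_mul]
  gcongr
  exact norm_add_le _ _

theorem weightedL1Norm_sum_le {ι : Type*} (hr : 0 ≤ r) (s : Finset ι) (f : ι → A[X]) :
    (∑ i ∈ s, f i).weightedL1Norm r ≤ ∑ i ∈ s, (f i).weightedL1Norm r :=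
  le_sum_of_subadditive _ weightedL1Norm_zero.le (weightedL1Norm_add_le hr) s f

theorem weightedL1Norm_mul_le (hr : 0 ≤ r) (p q : A[X]) :
    (p * q).weightedL1Norm r ≤ p.weightedL1Norm r * q.weightedL1Norm r := by
  calc (p * q).weightedL1Norm r
      ≤ ∑ i ∈ p.support, (q.sum fun j a => monomial (i + j) (p.coeff i * a)).weightedL1Norm r := by
        rw [mul_eq_sum_sum]
        exact weightedL1Norm_sum_le hr _ _
    _ ≤ ∑ i ∈ p.support, ‖p.coeff i‖ * r ^ i * q.weightedL1Norm r := by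
        gcongr with i
        rw [Polynomial.sum_def]
        refine (weightedL1Norm_sum_le hr _ _).trans ?_
        rw [weightedL1Norm_def q, mul_sum]
        gcongr with j
        rw [weightedL1Norm_monomial, pow_add, mul_mul_mul_comm]
        gcongr
        exact norm_mul_le _ _
    _ = p.weightedL1Norm r * q.weightedL1Norm r := by rw [← sum_mul, weightedL1Norm_def p]

theorem weightedL1Norm_erase_add (p : A[X]) (k : ℕ) :
    (p.erase k).weightedL1Norm r + ‖p.coeff k‖ * r ^ k = p.weightedL1Norm r := by
  have hn := lt_add_one (max p.natDegree k)
  rw [weightedL1Norm_eq_sum_range ((le_max_left _ _).trans_lt hn),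
    weightedL1Norm_eq_sum_range
      ((natDegree_le_natDegree (degree_erase_le p k)).trans_lt ((le_max_left _ _).trans_lt hn)),
    ← sum_erase_add _ _ (mem_range.2 ((le_max_right _ _).trans_lt hn)),
    ← sum_erase_add _ _ (mem_range.2 ((le_max_right _ _).trans_lt hn))]
  have hk : (p.erase k).coeff k = 0 := by simp
  rw [hk, norm_zero, zero_mul, add_zero]
  exact congrArg (· + _)
    (sum_congr rfl fun i hi => by rw [coeff_erase, if_neg (ne_of_mem_erase hi)])

theorem weightedL1Norm_erase_eq_sum {p : A[X]} {n : ℕ} (hn : p.natDegree < n) (k : ℕ) :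
    (p.erase k).weightedL1Norm r = ∑ i ∈ (range n).erase k, ‖p.coeff i‖ * r ^ i := by
  rw [weightedL1Norm_eq_sum_range ((natDegree_le_natDegree (degree_erase_le p k)).trans_lt hn),
    ← sum_erase (a := k) _ (by simp)]
  exact sum_congr rfl fun i hi => by rw [coeff_erase, if_neg (ne_of_mem_erase hi)]

def TkTest (p : A[X]) (k : ℕ) (r : ℝ) : Prop :=
  3 / 2 * (p.erase k).weightedL1Norm r < ‖p.coeff k‖ * r ^ k

theorem tkTest_of_weightedL1Norm_sub_monomial_lt (hr : 0 ≤ r) (p : A[X]) (k : ℕ) (c : A)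
    (h : 5 / 2 * (p - monomial k c).weightedL1Norm r < ‖c‖ * r ^ k) : p.TkTest k r := by
  unfold TkTest
  have herase : (p - monomial k c).erase k = p.erase k := by
    ext i
    by_cases hi : i = k <;> simp [coeff_monomial, hi, Ne.symm]
  have hsplit := weightedL1Norm_erase_add (r := r) (p - monomial k c) k
  rw [herase, coeff_sub, coeff_monomial_same] at hsplit
  have hc : ‖c‖ ≤ ‖p.coeff k‖ + ‖p.coeff k - c‖ := by
    simpa using norm_sub_le (p.coeff k) (p.coeff k - c)
  have hrk : 0 ≤ r ^ k := pow_nonneg hr k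
  linarith [weightedL1Norm_nonneg hr (p.erase k), mul_le_mul_of_nonneg_right hc hrk,
    mul_nonneg (norm_nonneg (p.coeff k - c)) hrk]

end SeminormedRing

section NormOneClass

variable [SeminormedRing A] [NormOneClass A] {r : ℝ}

theorem weightedL1Norm_X_sub_C_le (hr : 0 ≤ r) (z : A) :
    (X - C z).weightedL1Norm r ≤ r + ‖z‖ := by
  have h := weightedL1Norm_add_le hr (monomial 1 (1 : A)) (monomial 0 (-z))
  rwa [weightedL1Norm_monomial, weightedL1Norm_monomial, monomial_zero_left, C_neg,
    ← sub_eq_add_neg, monomial_one_one_eq_X, norm_neg, norm_one, pow_one, pow_zero, one_mul,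
    mul_one] at h

theorem weightedL1Norm_mul_sub_monomial_le (hr : 0 ≤ r) {p : A[X]} {k : ℕ} (hp : p.coeff k = 1)
    (q : A[X]) :
    (p * q - monomial k (q.coeff 0)).weightedL1Norm r ≤
      p.weightedL1Norm r * q.weightedL1Norm r - r ^ k * ‖q.coeff 0‖ := by
  have hp' := monomial_add_erase p k
  rw [hp] at hp'
  have hdecomp : p * q - monomial k (q.coeff 0) = monomial k 1 * q.erase 0 + p.erase k * q := by
    conv_lhs => rw [← hp', ← monomial_add_erase q 0]
    rw [add_mul, mul_add, monomial_mul_monomial, add_zero, one_mul, coeff_add, coeff_monomial_same,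
      coeff_erase, if_pos rfl, add_zero, monomial_add_erase]
    abel
  have hp_split := weightedL1Norm_erase_add (r := r) p k
  have hq_split := weightedL1Norm_erase_add (r := r) q 0
  rw [hp, norm_one, one_mul] at hp_split
  rw [pow_zero, mul_one] at hq_split
  calc (p * q - monomial k (q.coeff 0)).weightedL1Norm r
      ≤ (monomial k (1 : A)).weightedL1Norm r * (q.erase 0).weightedL1Norm r +
          (p.erase k).weightedL1Norm r * q.weightedL1Norm r := by
        rw [hdecomp]
        exact (weightedL1Norm_add_le hr _ _).trans
          (add_le_add (weightedL1Norm_mul_le hr _ _) (weightedL1Norm_mul_le hr _ _))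
    _ = p.weightedL1Norm r * q.weightedL1Norm r - r ^ k * ‖q.coeff 0‖ := by
        rw [weightedL1Norm_monomial, norm_one, one_mul, ← hp_split, ← hq_split]
        ring

end NormOneClass

section SeminormedCommRing

variable [SeminormedCommRing A] [NormOneClass A] {r : ℝ}

theorem weightedL1Norm_prod_X_sub_C_le (hr : 0 ≤ r) (s : Multiset A) :
    (s.map fun z => X - C z).prod.weightedL1Norm r ≤ (s.map fun z => r + ‖z‖).prod := by
  induction s using Multiset.induction_on with
  | empty => simp [← C_1, ← monomial_zero_left]
  | cons z s ih =>
    rw [Multiset.map_cons, Multiset.prod_cons, Multiset.map_cons, Multiset.prod_cons]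
    exact (weightedL1Norm_mul_le hr _ _).trans (mul_le_mul (weightedL1Norm_X_sub_C_le hr z) ih
      (weightedL1Norm_nonneg hr _) (by positivity))

theorem weightedL1Norm_prod_X_sub_C_le_of_norm_le (hr : 0 ≤ r) {s : Multiset A} {ε : ℝ}
    (hs : ∀ z ∈ s, ‖z‖ ≤ ε * r) :
    (s.map fun z => X - C z).prod.weightedL1Norm r ≤
      (1 + ε) ^ Multiset.card s * r ^ Multiset.card s := by
  refine (weightedL1Norm_prod_X_sub_C_le hr s).trans ?_
  rw [← mul_pow, ← Multiset.prod_replicate, ← Multiset.map_const']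
  exact Multiset.prod_map_le_prod_map₀ _ _ (fun _ _ => by positivity) fun z hz => by
    linarith [hs z hz]

end SeminormedCommRing

section NormedField

variable {K : Type*} [NormedField K] {r : ℝ}

theorem norm_coeff_zero_prod_X_sub_C (s : Multiset K) :
    ‖(s.map fun z => X - C z).prod.coeff 0‖ = (s.map fun z => ‖z‖).prod := by
  induction s using Multiset.induction_on with
  | empty => simp
  | cons z s ih => simp [mul_coeff_zero, ih]

theorem weightedL1Norm_C_mul_prod_X_sub_C_le_of_le_mul_norm (hr : 0 ≤ r) (c : K)
    {t : Multiset K} {ρ : ℝ} (ht : ∀ w ∈ t, r ≤ ρ * ‖w‖) :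
    (C c * (t.map fun w => X - C w).prod).weightedL1Norm r ≤
      (1 + ρ) ^ Multiset.card t * ‖(C c * (t.map fun w => X - C w).prod).coeff 0‖ := by
  rw [coeff_C_mul, norm_mul, norm_coeff_zero_prod_X_sub_C, mul_left_comm]
  refine (weightedL1Norm_mul_le hr _ _).trans ?_
  rw [← monomial_zero_left, weightedL1Norm_monomial, pow_zero, mul_one]
  gcongr
  refine (weightedL1Norm_prod_X_sub_C_le hr t).trans ?_
  rw [← Multiset.prod_replicate, ← Multiset.map_const', ← Multiset.prod_map_mul]
  exact Multiset.prod_map_le_prod_map₀ _ _ (fun _ _ => by positivity) fun w hw => by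
    linarith [ht w hw]

theorem prod_roots_filter_mul_C_mul_prod_roots_filter_not {p : K[X]}
    (hroots : Multiset.card p.roots = p.natDegree) (P : K → Prop) [DecidablePred P] :
    ((p.roots.filter P).map fun z => X - C z).prod *
        (C p.leadingCoeff * ((p.roots.filter fun z => ¬P z).map fun z => X - C z).prod) = p := by
  rw [mul_left_comm, ← Multiset.prod_add, ← Multiset.map_add, Multiset.filter_add_not,
    C_leadingCoeff_mul_prod_multiset_X_sub_C hroots]

theorem tkTest_of_roots_separated {p : K[X]} (hp : p ≠ 0)
    (hroots : Multiset.card p.roots = p.natDegree) {ε ρ : ℝ} (hr : 0 < r) {k : ℕ}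
    (hsmall : (p.roots.filter fun z => ‖z‖ ≤ ε * r).card = k)
    (hsplit : ∀ z ∈ p.roots, ‖z‖ ≤ ε * r ∨ r ≤ ρ * ‖z‖)
    (hερ : (1 + ε) ^ k * (1 + ρ) ^ (p.natDegree - k) < 7 / 5) :
    p.TkTest k r := by
  set s := p.roots.filter fun z => ‖z‖ ≤ ε * r
  set t := p.roots.filter fun z => ¬‖z‖ ≤ ε * r
  set P := (s.map fun z => X - C z).prod
  set Q := C p.leadingCoeff * (t.map fun z => X - C z).prod
  have hlarge : ∀ w ∈ t, r ≤ ρ * ‖w‖ := fun w hw =>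
    (hsplit w (Multiset.mem_of_mem_filter hw)).resolve_left (Multiset.mem_filter.1 hw).2
  have hcard : Multiset.card t = p.natDegree - k := by
    rw [← hroots, ← Multiset.filter_add_not (fun z => ‖z‖ ≤ ε * r) p.roots, Multiset.card_add,
      hsmall, Nat.add_sub_cancel_left]
  have hPk : P.coeff k = 1 := by
    rw [← hsmall, ← natDegree_multiset_prod_X_sub_C_eq_card]
    exact (monic_multiset_prod_of_monic _ _ fun z _ => monic_X_sub_C z).coeff_natDegree
  have hP := weightedL1Norm_prod_X_sub_C_le_of_norm_le (s := s) hr.le fun z hz =>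
    (Multiset.mem_filter.1 hz).2
  have hQ := weightedL1Norm_C_mul_prod_X_sub_C_le_of_le_mul_norm hr.le p.leadingCoeff hlarge
  have hQ0 : 0 < ‖Q.coeff 0‖ := by
    rw [coeff_C_mul, norm_mul, norm_coeff_zero_prod_X_sub_C]
    refine mul_pos (norm_pos_iff.2 (leadingCoeff_ne_zero.2 hp)) (Multiset.prod_pos fun x hx => ?_)
    obtain ⟨w, hw, rfl⟩ := Multiset.mem_map.1 hx
    by_contra! h
    have hw0 := hlarge w hw
    rw [le_antisymm h (norm_nonneg w), mul_zero] at hw0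
    exact hw0.not_gt hr
  have hPQ := weightedL1Norm_mul_sub_monomial_le hr.le hPk Q
  rw [prod_roots_filter_mul_C_mul_prod_roots_filter_not hroots] at hPQ
  refine tkTest_of_weightedL1Norm_sub_monomial_lt hr.le p k (Q.coeff 0) ?_
  have hPQ' := mul_le_mul hP hQ (weightedL1Norm_nonneg hr.le Q)
    ((weightedL1Norm_nonneg hr.le P).trans hP)
  rw [hsmall, hcard] at hPQ'
  linarith [mul_lt_mul_of_pos_right hερ (mul_pos (pow_pos hr k) hQ0)]

end NormedField

end Polynomial

theorem one_add_pow_le_inv_one_sub_mul {x : ℝ} {n : ℕ} (hx : 0 ≤ x) (h : n * x < 1) :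
    (1 + x) ^ n ≤ (1 - n * x)⁻¹ :=
  calc (1 + x) ^ n ≤ Real.exp x ^ n := by
        gcongr
        linarith [Real.add_one_le_exp x]
    _ = Real.exp (n * x) := (Real.exp_nat_mul x n).symm
    _ ≤ (1 - n * x)⁻¹ := by
        rw [← one_div]
        exact Real.exp_bound_div_one_sub_of_interval (by positivity) h

theorem one_add_inv_sixteen_mul_pow_le {n : ℕ} {m : ℝ} (h : (n : ℝ) ≤ m) :
    (1 + (16 * m)⁻¹) ^ n ≤ 16 / 15 := by
  have hm : 0 ≤ m := (Nat.cast_nonneg n).trans h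
  have hnm : n * (16 * m)⁻¹ ≤ 16⁻¹ := by
    rcases hm.eq_or_lt with rfl | hm
    · simp
    · rw [← div_eq_mul_inv, div_le_iff₀ (by positivity)]
      linarith
  calc (1 + (16 * m)⁻¹) ^ n ≤ (1 - n * (16 * m)⁻¹)⁻¹ :=
        one_add_pow_le_inv_one_sub_mul (by positivity) (by linarith)
    _ ≤ (1 - 16⁻¹)⁻¹ := inv_anti₀ (by norm_num) (by linarith)
    _ = 16 / 15 := by norm_num

theorem tk_test_completeness (R : Polynomial ℂ) (hR : R ≠ 0) (D k : ℕ)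
    (hdeg : R.natDegree = D) (hk : k ≤ D) (r : ℝ) (hr : 0 < r)
    (hsmall : (R.roots.filter (fun z => ‖z‖ ≤ r / (16 * D))).card = k)
    (hsplit : ∀ z ∈ R.roots, ‖z‖ ≤ r / (16 * D) ∨ 16 * (D : ℝ) ^ 4 * r ≤ ‖z‖) :
    ‖R.coeff k‖ * r ^ k >
      (3 / 2) * ∑ i ∈ (Finset.range (D + 1)).erase k, ‖R.coeff i‖ * r ^ i := by
  have hroots : Multiset.card R.roots = R.natDegree := IsAlgClosed.card_roots_eq_natDegree
  simp_rw [div_eq_inv_mul] at hsmall hsplit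
  have hsep : ∀ z ∈ R.roots, ‖z‖ ≤ (16 * (D : ℝ))⁻¹ * r ∨ r ≤ (16 * (D : ℝ) ^ 4)⁻¹ * ‖z‖ := by
    intro z hz
    refine (hsplit z hz).imp_right fun h => ?_
    have hD : 0 < D := hdeg ▸ hroots ▸ Multiset.card_pos_iff_exists_mem.2 ⟨z, hz⟩
    rw [inv_mul_eq_div, le_div_iff₀ (by positivity)]
    linarith
  have hsum := weightedL1Norm_erase_eq_sum (r := r) (p := R) (n := D + 1) (by omega) k
  rw [gt_iff_lt, ← hsum]
  refine tkTest_of_roots_separated hR hroots hr hsmall hsep ?_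
  rw [hdeg]
  have hα := one_add_inv_sixteen_mul_pow_le (n := k) (m := D) (by exact_mod_cast hk)
  have hβ := one_add_inv_sixteen_mul_pow_le (n := D - k) (m := (D : ℝ) ^ 4)
    (by exact_mod_cast (Nat.sub_le D k).trans (Nat.le_self_pow (by norm_num) D))
  calc _ ≤ (16 / 15 : ℝ) * (16 / 15) := mul_le_mul hα hβ (by positivity) (by norm_num)
    _ < 7 / 5 := by norm_num
end
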